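/- arXiv:1401.7623 — 4 statements merged into one kernel-verified Lean document; each statement's English description precedes it below -/
import Mathlib

section
/- If a symmetric real n×n matrix A has simple spectrum (all eigenvalues distinct) and none of its eigenvectors is orthogonal to the all-ones vector, then the only permutation matrix Π satisfying ΠA = AΠ is the identity. -/
open Matrix

/-- `P` is a permutation matrix. -/
def IsPermMatrix {n : ℕ} (P : Matrix (Fin n) (Fin n) ℝ) : Prop :=
  ∃ σ : Equiv.Perm (Fin n), P = σ.permMatrix ℝ

/-- `A` has simple spectrum: every eigenspace has dimension at most one. -/
def HasSimpleSpectrum {n : ℕ} (A : Matrix (Fin n) (Fin n) ℝ) : Prop :=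
  ∀ μ : ℝ, Module.finrank ℝ (Module.End.eigenspace (Matrix.toLin' A) μ) ≤ 1

/-- `u` is an eigenvector of `A`. -/
def IsEigenvector {n : ℕ} (A : Matrix (Fin n) (Fin n) ℝ) (u : Fin n → ℝ) : Prop :=
  u ≠ 0 ∧ ∃ μ : ℝ, A.mulVec u = μ • u

/-!
A symmetry `Π` commutes with `A`, so it preserves every eigenspace; these are lines, hence
`Π u = c u` for each eigenvector `u`. Permuting coordinates preserves their sum, so
`c · ∑ u = ∑ u`, and `∑ u ≠ 0` forces `c = 1`. Thus `Π` fixes an orthonormal eigenbasis of `A`,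
which exists by the spectral theorem, and `Π = 1`.
-/

theorem Submodule.exists_smul_eq_of_finrank_le_one {K V : Type*} [DivisionRing K]
    [AddCommGroup V] [Module K V] [FiniteDimensional K V] {S : Submodule K V}
    (hS : Module.finrank K S ≤ 1) {u v : V} (hu : u ∈ S) (hu0 : u ≠ 0) (hv : v ∈ S) :
    ∃ c : K, c • u = v := by
  have hspan : K ∙ u = S := eq_of_le_of_finrank_le (span_singleton_le_iff_mem u S |>.mpr hu)
    (by rwa [finrank_span_singleton hu0])
  exact mem_span_singleton.mp (hspan ▸ hv)

theorem Equiv.Perm.sum_permMatrix_mulVec {m R : Type*} [Fintype m] [DecidableEq m] [CommRing R]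
    (σ : Equiv.Perm m) (v : m → R) : ∑ i, (σ.permMatrix R *ᵥ v) i = ∑ i, v i := by
  rw [permMatrix_mulVec]
  exact Equiv.sum_comp σ v

theorem Equiv.Perm.permMatrix_mulVec_eq_self_of_eq_smul {m K : Type*} [Fintype m] [DecidableEq m]
    [Field K] {σ : Equiv.Perm m} {u : m → K} {c : K} (h : σ.permMatrix K *ᵥ u = c • u)
    (hu : ∑ i, u i ≠ 0) : σ.permMatrix K *ᵥ u = u := by
  have hsum : c * ∑ i, u i = ∑ i, u i :=
    calc c * ∑ i, u i = ∑ i, (c • u) i := by simp only [Finset.mul_sum, Pi.smul_apply, smul_eq_mul]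
      _ = ∑ i, u i := by rw [← h, σ.sum_permMatrix_mulVec]
  rw [h, (mul_eq_right₀ hu).mp hsum, one_smul]

theorem Matrix.IsHermitian.eq_one_of_mulVec_eigenvectorBasis {m 𝕜 : Type*} [Fintype m]
    [DecidableEq m] [RCLike 𝕜] {A B : Matrix m m 𝕜} (hA : A.IsHermitian)
    (h : ∀ i, B *ᵥ ⇑(hA.eigenvectorBasis i) = ⇑(hA.eigenvectorBasis i)) : B = 1 := by
  set U : Matrix m m 𝕜 := (hA.eigenvectorUnitary : Matrix m m 𝕜)
  have hBU : B * U = U := ext_of_mulVec_single fun j => by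
    rw [← mulVec_mulVec, hA.eigenvectorUnitary_mulVec, h]
  have hU : U * star U = 1 := Unitary.mul_star_self_of_mem hA.eigenvectorUnitary.2
  calc B = B * U * star U := by rw [mul_assoc, hU, mul_one]
    _ = 1 := by rw [hBU, hU]

theorem HasSimpleSpectrum.exists_smul_eq_mulVec_of_commute {n : ℕ}
    {A P : Matrix (Fin n) (Fin n) ℝ} (hA : HasSimpleSpectrum A) (hcomm : P * A = A * P)
    {u : Fin n → ℝ} {μ : ℝ} (hu : A *ᵥ u = μ • u) (hu0 : u ≠ 0) : ∃ c : ℝ, c • u = P *ᵥ u := by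
  have hPu : A *ᵥ (P *ᵥ u) = μ • (P *ᵥ u) := by
    rw [mulVec_mulVec, ← hcomm, ← mulVec_mulVec, hu, mulVec_smul]
  refine Submodule.exists_smul_eq_of_finrank_le_one (hA μ) ?_ hu0 ?_ <;>
    rwa [Module.End.mem_eigenspace_iff, toLin'_apply]

theorem stmt_0 {n : ℕ} (A : Matrix (Fin n) (Fin n) ℝ) (hA : A.IsSymm)
    (hsimple : HasSimpleSpectrum A)
    (hfriendly : ∀ u : Fin n → ℝ, IsEigenvector A u → ∑ i, u i ≠ 0)
    (P : Matrix (Fin n) (Fin n) ℝ) (hP : IsPermMatrix P)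
    (hcomm : P * A = A * P) : P = 1 := by
  obtain ⟨σ, rfl⟩ := hP
  have hA' : A.IsHermitian := by rwa [IsHermitian, conjTranspose_eq_transpose_of_trivial]
  refine hA'.eq_one_of_mulVec_eigenvectorBasis fun i => ?_
  set u : Fin n → ℝ := ⇑(hA'.eigenvectorBasis i)
  have hu : A *ᵥ u = hA'.eigenvalues i • u := hA'.mulVec_eigenvectorBasis i
  have hu0 : u ≠ 0 := by
    simpa [u] using (hA'.eigenvectorBasis.orthonormal.ne_zero i : hA'.eigenvectorBasis i ≠ 0)
  obtain ⟨c, hc⟩ := hsimple.exists_smul_eq_mulVec_of_commute hcomm hu hu0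
  exact Equiv.Perm.permMatrix_mulVec_eq_self_of_eq_smul hc.symm (hfriendly u ⟨hu0, _, hu⟩)
end

section
/- Let B be a symmetric n×n matrix with simple spectrum whose eigenvectors all have nonzero inner product with 𝟙. Then the only matrix Q satisfying Q𝟙 = 𝟙 and QB = BQ is the identity matrix. -/
open Matrix

/-!
Since `B` is symmetric, `Qᵀ` commutes with `B` as well, so it maps each eigenspace of `B` into
itself. The eigenspaces are lines, hence every eigenvector `u` satisfies `Qᵀ u = c u`. Taking
coordinate sums, `𝟙ᵀ Qᵀ u = (Q 𝟙)ᵀ u = 𝟙ᵀ u`, and `𝟙ᵀ u ≠ 0` forces `c = 1`. Thus `Qᵀ` fixes an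
orthonormal eigenbasis of `B`, i.e. `Qᵀ = 1`.
-/

namespace Matrix

variable {ι : Type*} [Fintype ι]

theorem IsSymm.commute_transpose {R : Type*} [CommSemiring R] {A M : Matrix ι ι R}
    (hA : A.IsSymm) (h : Commute M A) : Commute Mᵀ A := by
  rw [← hA.eq, Commute, SemiconjBy, ← transpose_mul, ← transpose_mul, h.eq]

theorem sum_transpose_mulVec_of_mulVec_one {R : Type*} [CommSemiring R] {M : Matrix ι ι R}
    (hM : M *ᵥ 1 = 1) (u : ι → R) : ∑ i, (Mᵀ *ᵥ u) i = ∑ i, u i := by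
  rw [← one_dotProduct, ← one_dotProduct, dotProduct_mulVec, vecMul_transpose, hM]

variable [DecidableEq ι]

theorem exists_mulVec_eq_smul_of_commute_of_finrank_eigenspace_le_one {K : Type*} [Field K]
    {A M : Matrix ι ι K} (h : Commute M A) {μ : K}
    (hμ : Module.finrank K (Module.End.eigenspace (toLin' A) μ) ≤ 1)
    {u : ι → K} (hu0 : u ≠ 0) (hu : A *ᵥ u = μ • u) : ∃ c : K, M *ᵥ u = c • u := by
  have hu_mem : u ∈ Module.End.eigenspace (toLin' A) μ := by
    rw [Module.End.mem_eigenspace_iff, toLin'_apply, hu]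
  have hMu_mem : M *ᵥ u ∈ Module.End.eigenspace (toLin' A) μ := by
    rw [Module.End.mem_eigenspace_iff, toLin'_apply, mulVec_mulVec, ← h.eq, ← mulVec_mulVec,
      hu, mulVec_smul]
  have hspan : Submodule.span K {u} = Module.End.eigenspace (toLin' A) μ :=
    Submodule.eq_of_le_of_finrank_le ((Submodule.span_singleton_le_iff_mem _ _).mpr hu_mem)
      (by rwa [finrank_span_singleton hu0])
  obtain ⟨c, hc⟩ := Submodule.mem_span_singleton.mp (hspan ▸ hMu_mem)
  exact ⟨c, hc.symm⟩

theorem IsHermitian.eq_one_of_mulVec_eigenvectorBasis_s8 {𝕜 : Type*} [RCLike 𝕜]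
    {A M : Matrix ι ι 𝕜} (hA : A.IsHermitian)
    (h : ∀ j, M *ᵥ ⇑(hA.eigenvectorBasis j) = ⇑(hA.eigenvectorBasis j)) : M = 1 := by
  apply toLin'.injective
  refine Module.Basis.ext (hA.eigenvectorBasis.toBasis.map (WithLp.linearEquiv 2 𝕜 (ι → 𝕜)))
    fun j => ?_
  simpa [toLin'_apply, WithLp.coe_linearEquiv] using h j

end Matrix

theorem stmt_8 {n : ℕ} (B : Matrix (Fin n) (Fin n) ℝ) (hB : B.IsSymm)
    (hsimple : HasSimpleSpectrum B)
    (hfriendly : ∀ u : Fin n → ℝ, IsEigenvector B u → ∑ i, u i ≠ 0)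
    (Q : Matrix (Fin n) (Fin n) ℝ)
    (hstoch : Q.mulVec (fun _ => 1) = fun _ => 1)
    (hcomm : Q * B = B * Q) : Q = 1 := by
  have hcommT : Commute Qᵀ B := hB.commute_transpose hcomm
  have hfix : ∀ u, IsEigenvector B u → Qᵀ *ᵥ u = u := by
    intro u hu
    obtain ⟨hu0, μ, hμ⟩ := hu
    obtain ⟨c, hc⟩ :=
      exists_mulVec_eq_smul_of_commute_of_finrank_eigenspace_le_one hcommT (hsimple μ) hu0 hμ
    have hc1 : c = 1 := by
      have hsum := sum_transpose_mulVec_of_mulVec_one hstoch u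
      simp only [hc, Pi.smul_apply, smul_eq_mul, ← Finset.mul_sum] at hsum
      exact (mul_eq_right₀ (hfriendly u ⟨hu0, μ, hμ⟩)).mp hsum
    rw [hc, hc1, one_smul]
  have hB' : B.IsHermitian := isHermitian_iff_isSymm.mpr hB
  have hQT : Qᵀ = 1 := hB'.eq_one_of_mulVec_eigenvectorBasis_s8 fun j =>
    hfix _ ⟨(hB'.eigenvectorBasis.orthonormal.ne_zero j) ∘ (WithLp.ofLp_eq_zero 2).mp,
      _, hB'.mulVec_eigenvectorBasis j⟩
  rw [← transpose_transpose Q, hQT, transpose_one]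
end

section
/- Let A and B be friendly isomorphic graphs with unique isomorphism Π*. Then Π* is the unique minimizer over pseudo-stochastic matrices P (satisfying P𝟙 = 𝟙) of the convex function f(P) = ‖PA − BP‖_F². -/
/-!
The objective is nonnegative and vanishes at `Pstar`, so it suffices to show that `Pstar` is the
only pseudo-stochastic `P` with `P * A = B * P`. For such `P`, the matrix `Q = Pstar⁻¹ * P`
commutes with `A` and fixes `𝟙`. Since `A` is symmetric with simple spectrum, `Q` scales every
vector of an eigenbasis of `A`; as no eigenvector is orthogonal to `𝟙`, every coordinate of `𝟙` in
that basis is nonzero, and `Q 𝟙 = 𝟙` forces all the scaling factors to be `1`, i.e. `Q = 1`.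
-/

open Matrix

def IsFriendly {n : ℕ} (A : Matrix (Fin n) (Fin n) ℝ) : Prop :=
  HasSimpleSpectrum A ∧ ∀ u : Fin n → ℝ, IsEigenvector A u → ∑ i, u i ≠ 0

noncomputable def frobNorm {n m : ℕ} (A : Matrix (Fin n) (Fin m) ℝ) : ℝ :=
  Real.sqrt (∑ i, ∑ j, (A i j) ^ 2)

namespace Module.End

variable {K V ι : Type*} [Field K] [AddCommGroup V] [Module K V] [FiniteDimensional K V]
  {f g : Module.End K V}

lemma exists_apply_eq_smul_of_commute {μ : K} {v : V} (hμ : finrank K (f.eigenspace μ) ≤ 1)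
    (hv : f.HasEigenvector μ v) (hfg : Commute f g) : ∃ c : K, g v = c • v := by
  have hspan : K ∙ v = f.eigenspace μ :=
    Submodule.eq_of_le_of_finrank_le
      ((Submodule.span_singleton_le_iff_mem _ _).mpr hv.1)
      (by rwa [finrank_span_singleton hv.2])
  have hgv : g v ∈ f.eigenspace μ := mapsTo_genEigenspace_of_comm hfg μ 1 hv.1
  obtain ⟨c, hc⟩ := Submodule.mem_span_singleton.mp (hspan ▸ hgv)
  exact ⟨c, hc.symm⟩

lemma eq_one_of_commute_of_repr_ne_zero [Fintype ι] (b : Basis ι K V) (μ : ι → K)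
    (hb : ∀ i, f.HasEigenvector (μ i) (b i)) (hsimple : ∀ ν, finrank K (f.eigenspace ν) ≤ 1)
    (hfg : Commute f g) {x : V} (hx : ∀ i, b.repr x i ≠ 0) (hgx : g x = x) : g = 1 := by
  choose c hc using fun i => exists_apply_eq_smul_of_commute (hsimple _) (hb i) hfg
  have hgx' : g x = ∑ i, (c i * b.repr x i) • b i :=
    calc g x = g (∑ i, b.repr x i • b i) := by rw [b.sum_repr]
      _ = _ := by simp only [map_sum, map_smul, hc, smul_smul, mul_comm]
  have hc1 : ∀ i, c i = 1 := fun i => by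
    have := congrArg (fun y => b.repr y i) (hgx'.symm.trans hgx)
    simp only [b.repr_sum_self] at this
    exact mul_left_eq_self₀.mp this |>.resolve_right (hx i)
  exact b.ext fun i => by simp [hc, hc1]

end Module.End

lemma IsFriendly.eq_one_of_commute {n : ℕ} {A Q : Matrix (Fin n) (Fin n) ℝ} (hf : IsFriendly A)
    (hA : A.IsSymm) (hQA : Commute Q A) (hQ : Q *ᵥ 1 = 1) : Q = 1 := by
  have hH : A.IsHermitian := by
    rwa [Matrix.IsHermitian, Matrix.conjTranspose_eq_transpose_of_trivial]
  let b : Module.Basis (Fin n) ℝ (Fin n → ℝ) :=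
    hH.eigenvectorBasis.toBasis.map (WithLp.linearEquiv 2 ℝ (Fin n → ℝ))
  have hb_apply : ∀ i, b i = (hH.eigenvectorBasis i).ofLp := fun i => by simp [b]
  have hb : ∀ i, Module.End.HasEigenvector (toLin' A) (hH.eigenvalues i) (b i) := fun i => by
    refine Module.End.hasEigenvector_iff.mpr ⟨?_, ?_⟩
    · rw [Module.End.mem_eigenspace_iff, toLin'_apply, hb_apply]
      exact hH.mulVec_eigenvectorBasis i
    · exact b.ne_zero i
  have hrepr : ∀ i, b.repr 1 i = ∑ k, b i k := fun i => by
    simp [b, hb_apply, OrthonormalBasis.repr_apply_apply, PiLp.inner_apply]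
  apply Matrix.toLin'.injective
  rw [Matrix.toLin'_one]
  refine Module.End.eq_one_of_commute_of_repr_ne_zero b _ hb hf.1
    (hQA.symm.map Matrix.toLinAlgEquiv') (x := 1) (fun i => ?_) (by simpa using hQ)
  rw [hrepr]
  exact hf.2 (b i) ⟨b.ne_zero i, _, (hb i).apply_eq_smul⟩

lemma IsFriendly.eq_of_mul_eq_mul {n : ℕ} {A B P₀ P : Matrix (Fin n) (Fin n) ℝ}
    (hf : IsFriendly A) (hA : A.IsSymm) (hP₀ : IsUnit P₀) (h₀ : P₀ * A = B * P₀)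
    (h₀1 : P₀ *ᵥ 1 = 1) (h : P * A = B * P) (h1 : P *ᵥ 1 = 1) : P = P₀ := by
  have hdet := (isUnit_iff_isUnit_det P₀).mp hP₀
  have hAinv : A * P₀⁻¹ = P₀⁻¹ * B :=
    calc A * P₀⁻¹ = P₀⁻¹ * (P₀ * A) * P₀⁻¹ := by
          rw [nonsing_inv_mul_cancel_left (A := P₀) A hdet]
      _ = P₀⁻¹ * B := by
          rw [h₀, ← mul_assoc, mul_nonsing_inv_cancel_right (A := P₀) _ hdet]
  have hQA : Commute (P₀⁻¹ * P) A :=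
    calc P₀⁻¹ * P * A = P₀⁻¹ * (B * P) := by rw [mul_assoc, h]
      _ = A * (P₀⁻¹ * P) := by rw [← mul_assoc, ← hAinv, mul_assoc]
  have hQ1 : (P₀⁻¹ * P) *ᵥ 1 = 1 := by
    rw [← mulVec_mulVec, h1]
    nth_rw 1 [← h₀1]
    rw [mulVec_mulVec, nonsing_inv_mul _ hdet, one_mulVec]
  rw [← mul_nonsing_inv_cancel_left (A := P₀) P hdet, hf.eq_one_of_commute hA hQA hQ1, mul_one]

lemma IsPermMatrix.isUnit {n : ℕ} {P : Matrix (Fin n) (Fin n) ℝ} (hP : IsPermMatrix P) :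
    IsUnit P := by
  obtain ⟨σ, rfl⟩ := hP
  simpa using (Group.isUnit σ⁻¹).map (permMatrixHom (n := Fin n) (R := ℝ))

lemma IsPermMatrix.mulVec_one {n : ℕ} {P : Matrix (Fin n) (Fin n) ℝ} (hP : IsPermMatrix P) :
    P *ᵥ 1 = 1 := by
  obtain ⟨σ, rfl⟩ := hP
  rw [permMatrix_mulVec]
  rfl

lemma frobNorm_zero {n m : ℕ} : frobNorm (0 : Matrix (Fin n) (Fin m) ℝ) = 0 := by
  simp [frobNorm]

lemma frobNorm_pos {n m : ℕ} {M : Matrix (Fin n) (Fin m) ℝ} (hM : M ≠ 0) : 0 < frobNorm M := by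
  obtain ⟨i, j, hij⟩ : ∃ i j, M i j ≠ 0 := by
    by_contra! h
    exact hM (Matrix.ext h)
  refine Real.sqrt_pos.mpr (Finset.sum_pos' (fun _ _ => by positivity) ⟨i, Finset.mem_univ _, ?_⟩)
  exact Finset.sum_pos' (fun _ _ => by positivity) ⟨j, Finset.mem_univ _, by positivity⟩

theorem stmt_9_general {n : ℕ} (A B : Matrix (Fin n) (Fin n) ℝ)
    (hA : A.IsSymm)
    (hfA : IsFriendly A)
    (Pstar : Matrix (Fin n) (Fin n) ℝ) (hPstar : IsPermMatrix Pstar)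
    (hiso : Pstar * A = B * Pstar) :
    ∀ P : Matrix (Fin n) (Fin n) ℝ, P.mulVec (fun _ => 1) = (fun _ => 1) →
      P ≠ Pstar →
      frobNorm (Pstar * A - B * Pstar) ^ 2 < frobNorm (P * A - B * P) ^ 2 := by
  intro P hP1 hne
  have hPA : P * A ≠ B * P := fun h =>
    hne (hfA.eq_of_mul_eq_mul hA hPstar.isUnit hiso hPstar.mulVec_one h hP1)
  rw [sub_eq_zero.mpr hiso, frobNorm_zero, zero_pow two_ne_zero]
  exact pow_pos (frobNorm_pos (sub_ne_zero.mpr hPA)) 2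

theorem stmt_9 {n : ℕ} (A B : Matrix (Fin n) (Fin n) ℝ)
    (hA : A.IsSymm) (hB : B.IsSymm)
    (hfA : IsFriendly A) (hfB : IsFriendly B)
    (Pstar : Matrix (Fin n) (Fin n) ℝ) (hPstar : IsPermMatrix Pstar)
    (hiso : Pstar * A = B * Pstar) :
    ∀ P : Matrix (Fin n) (Fin n) ℝ, P.mulVec (fun _ => 1) = (fun _ => 1) →
      P ≠ Pstar →
      frobNorm (Pstar * A - B * Pstar) ^ 2 < frobNorm (P * A - B * P) ^ 2 :=
  stmt_9_general A B hA hfA Pstar hPstar hiso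
end

section
/- Let F be an n×n matrix, Λ = diag(λ_1,...,λ_n) with distinct λ_i, and v ∈ ℝⁿ with all components nonzero and γ ∈ ℝⁿ. If FΛ² + Λ²F − 2ΛFΛ + γvᵀ = 0 and Fv = v, then F = I and γ = 0. -/
open Matrix

theorem stmt_10 {n : ℕ} (F : Matrix (Fin n) (Fin n) ℝ) (lam : Fin n → ℝ)
    (hdist : ∀ i j : Fin n, i ≠ j → lam i ≠ lam j)
    (v γ : Fin n → ℝ) (hv : ∀ i, v i ≠ 0)
    (heq : F * (Matrix.diagonal lam) ^ 2 + (Matrix.diagonal lam) ^ 2 * F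
        - 2 • (Matrix.diagonal lam * F * Matrix.diagonal lam)
        + Matrix.vecMulVec γ v = 0)
    (hFv : F.mulVec v = v) :
    F = 1 ∧ γ = 0 := by
  have key : ∀ i j, F i j * (lam i - lam j)^2 + γ i * v j = 0 := by
    intro i j
    have h := congrFun (congrFun heq i) j
    simp only [Matrix.add_apply, Matrix.sub_apply, Matrix.smul_apply,
      Matrix.diagonal_pow, Matrix.mul_diagonal, Matrix.diagonal_mul,
      Matrix.vecMulVec_apply, Matrix.zero_apply, Pi.pow_apply] at h
    simp only [nsmul_eq_mul, Nat.cast_ofNat] at h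
    nlinarith [h]
  have hγ : γ = 0 := by
    funext i
    have h := key i i
    simp at h
    rcases h with h | h
    · exact h
    · exact absurd h (hv i)
  have hoff : ∀ i j, i ≠ j → F i j = 0 := by
    intro i j hij
    have h := key i j
    rw [hγ] at h
    simp at h
    rcases h with h | h
    · exact h
    · exact absurd (sub_eq_zero.mp h) (hdist i j hij)
  refine ⟨?_, hγ⟩
  funext i j
  by_cases hij : i = j
  · subst hij
    have h := congrFun hFv i
    simp [Matrix.mulVec, dotProduct] at h
    have : ∑ k, F i k * v k = F i i * v i := by
      rw [Finset.sum_eq_single i]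
      · intro k _ hk
        simp [hoff i k (Ne.symm hk)]
      · simp
    rw [this] at h
    have := mul_right_cancel₀ (hv i) (h.trans (one_mul (v i)).symm)
    simpa using this
  · simp [hoff i j hij, Matrix.one_apply, hij]
end
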